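/- Let K be a field of characteristic zero, let k ≥ 1, and let t_1, …, t_k be nonzero elements of K such that t_1 t_2 ⋯ t_k = 1 and such that t_{c+1} t_{c+2} ⋯ t_b ≠ 1 for all 1 ≤ c < b ≤ k. Let p(x) be a Laurent polynomial over K such that (1 − t_a·x) divides p(x) for every a ∈ {1, …, k}. Say that a symmetric Laurent polynomial R in n variables satisfies the wheel condition if, whenever n ≥ k, the Laurent polynomial obtained from R by substituting z_a := w · t_2 t_3 ⋯ t_a for a = 1, …, k (where w is a new variable, the product being empty for a = 1, and the remaining variables z_{k+1}, …, z_n left free) is identically zero. Then the wheel condition is preserved by the shuffle product: if R (in n variables) and R' (in n' variables) are symmetric Laurent polynomials satisfying the wheel condition, then the symmetric Laurent polynomial G(z_1, …, z_{n+n'}) := ∑_{σ ∈ S_{n+n'}} σ·[ R(z_1,…,z_n) · R'(z_{n+1},…,z_{n+n'}) · ∏_{1 ≤ a ≤ n < b ≤ n+n'} p(z_a/z_b) · z_b/(z_b − z_a) ] also satisfies the wheel condition. -/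

import Mathlib

/-!
Substitute the wheel point `W` (`z_a = t 2 ⋯ t a · w` for the first `k` variables, the others
left generic) into the identity `C = ∑_σ (σ-summand)` of rational functions. The substitution
`z_i ↦ W i` does not extend to the whole fraction field, but every denominator in the identity
is a monomial or a difference `z_b - z_a` of distinct variables, and `t (c+1) ⋯ t b ≠ 1` keeps the
entries of `W` pairwise distinct, so all these denominators survive (`SpecializesTo`).

Each summand then vanishes at `W`. If all `k` wheel variables are fed to `R`, symmetry of `R`
moves them into its first `k` slots and its wheel condition kills the factor `R`; likewise for
`R'`. Otherwise, going once around the cycle `1 → 2 → ⋯ → k → 1`, some `z_c` is fed to `R` and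
the next one `z_{c+1}` to `R'`; then `z_c / z_{c+1} = (t a)⁻¹` (with `a = 1` at the wrap-around,
because `t 1 ⋯ t k = 1`), and `p` vanishes there since `1 - t a x` divides it.
-/

open MvPolynomial

noncomputable section

/-- The field of rational functions over `K` in countably many variables `z₀, z₁, z₂, …`. -/
abbrev Fld (K : Type*) [Field K] := FractionRing (MvPolynomial ℕ K)

/-- The generic variable `z_i`. -/
def ZZ (K : Type*) [Field K] (i : ℕ) : Fld K :=
  algebraMap (MvPolynomial ℕ K) (Fld K) (X i)

/-- Evaluation of a one-variable Laurent polynomial `p` over `K` at a rational function. -/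
def lEv (K : Type*) [Field K] (p : LaurentPolynomial K) (x : Fld K) : Fld K :=
  Finsupp.sum (AddMonoidAlgebra.coeff p) fun m c => algebraMap K (Fld K) c * x ^ m

/-- Evaluation of the Laurent polynomial in `n` variables with coefficient function `R` at
the point `v`. -/
def evF (K : Type*) [Field K] {n : ℕ} (R : (Fin n → ℤ) →₀ K) (v : Fin n → Fld K) : Fld K :=
  Finsupp.sum R fun e c => algebraMap K (Fld K) c * ∏ i, v i ^ e i

/-- The wheel condition for the parameters `t 1, …, t k`: whenever `m ≥ k`, substituting
`z_a := w · t 2 ⋯ t a` for `a = 1, …, k` (the variable `w` and the remaining variables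
`z_{k+1}, …, z_m` being left generic) into the `m`-variable Laurent polynomial with
coefficient function `C` yields the identically zero Laurent polynomial. -/
def WheelCond (K : Type*) [Field K] (k : ℕ) (t : ℕ → K) {m : ℕ}
    (C : (Fin m → ℤ) →₀ K) : Prop :=
  k ≤ m →
    evF K C (fun a =>
      if a.val < k then
        algebraMap K (Fld K) (∏ j ∈ Finset.Icc 2 (a.val + 1), t j) * ZZ K m
      else ZZ K a.val) = 0

section Specialization

variable {A F L : Type*} [CommRing A] [Field F] [Algebra A F] [Field L] {ψ : A →+* L}

/-- `y` is the value under `ψ` of the fraction `x = f / g`, defined whenever `ψ g ≠ 0`. -/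
def SpecializesTo (ψ : A →+* L) (x : F) (y : L) : Prop :=
  ∃ f g : A, ψ g ≠ 0 ∧ algebraMap A F g * x = algebraMap A F f ∧ ψ g * y = ψ f

theorem specializesTo_algebraMap (f : A) : SpecializesTo ψ (algebraMap A F f) (ψ f) :=
  ⟨f, 1, by simp, by simp, by simp⟩

theorem specializesTo_zero : SpecializesTo ψ (0 : F) 0 := by
  simpa using specializesTo_algebraMap (F := F) (ψ := ψ) 0

theorem specializesTo_one : SpecializesTo ψ (1 : F) 1 := by
  simpa using specializesTo_algebraMap (F := F) (ψ := ψ) 1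

namespace SpecializesTo

variable {x x' : F} {y y' : L}

theorem unique [IsFractionRing A F] (h : SpecializesTo ψ x y) (h' : SpecializesTo ψ x y') :
    y = y' := by
  obtain ⟨f, g, hg, hx, hy⟩ := h
  obtain ⟨f', g', hg', hx', hy'⟩ := h'
  have hcross : ψ g' * ψ f = ψ g * ψ f' := by
    have : g' * f = g * f' := IsFractionRing.injective A F <| by
      simp only [map_mul, ← hx, ← hx']; ring
    rw [← map_mul, ← map_mul, this]
  apply mul_left_cancel₀ (mul_ne_zero hg hg')
  linear_combination ψ g' * hy - ψ g * hy' + hcross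

theorem add (h : SpecializesTo ψ x y) (h' : SpecializesTo ψ x' y') :
    SpecializesTo ψ (x + x') (y + y') := by
  obtain ⟨f, g, hg, hx, hy⟩ := h
  obtain ⟨f', g', hg', hx', hy'⟩ := h'
  refine ⟨f * g' + f' * g, g * g', by simp [hg, hg'], ?_, ?_⟩
  · simp only [map_add, map_mul]
    linear_combination algebraMap A F g' * hx + algebraMap A F g * hx'
  · simp only [map_add, map_mul]
    linear_combination ψ g' * hy + ψ g * hy'

theorem mul (h : SpecializesTo ψ x y) (h' : SpecializesTo ψ x' y') :
    SpecializesTo ψ (x * x') (y * y') := by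
  obtain ⟨f, g, hg, hx, hy⟩ := h
  obtain ⟨f', g', hg', hx', hy'⟩ := h'
  refine ⟨f * f', g * g', by simp [hg, hg'], ?_, ?_⟩
  · rw [map_mul, map_mul, mul_mul_mul_comm, hx, hx']
  · rw [map_mul, map_mul, mul_mul_mul_comm, hy, hy']

theorem neg (h : SpecializesTo ψ x y) : SpecializesTo ψ (-x) (-y) := by
  obtain ⟨f, g, hg, hx, hy⟩ := h
  exact ⟨-f, g, hg, by rw [map_neg, ← hx, mul_neg], by rw [map_neg, ← hy, mul_neg]⟩

theorem sub (h : SpecializesTo ψ x y) (h' : SpecializesTo ψ x' y') :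
    SpecializesTo ψ (x - x') (y - y') := by
  simpa only [sub_eq_add_neg] using h.add h'.neg

theorem inv [IsFractionRing A F] (h : SpecializesTo ψ x y) (hy : y ≠ 0) :
    SpecializesTo ψ x⁻¹ y⁻¹ := by
  obtain ⟨f, g, hg, hx, hyf⟩ := h
  have hf : ψ f ≠ 0 := hyf ▸ mul_ne_zero hg hy
  have hx0 : x ≠ 0 := by
    rintro rfl
    rw [mul_zero, eq_comm, IsFractionRing.to_map_eq_zero_iff] at hx
    simp [hx] at hf
  refine ⟨g, f, hf, ?_, ?_⟩
  · rw [← hx, mul_assoc, mul_inv_cancel₀ hx0, mul_one]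
  · rw [← hyf, mul_assoc, mul_inv_cancel₀ hy, mul_one]

theorem div [IsFractionRing A F] (h : SpecializesTo ψ x y) (h' : SpecializesTo ψ x' y')
    (hy' : y' ≠ 0) :
    SpecializesTo ψ (x / x') (y / y') := by
  simpa only [div_eq_mul_inv] using h.mul (h'.inv hy')

theorem pow (h : SpecializesTo ψ x y) (e : ℕ) : SpecializesTo ψ (x ^ e) (y ^ e) := by
  induction e with
  | zero => simpa using specializesTo_one
  | succ e ih => simpa only [pow_succ] using ih.mul h

theorem zpow [IsFractionRing A F] (h : SpecializesTo ψ x y) (hy : y ≠ 0) (e : ℤ) :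
    SpecializesTo ψ (x ^ e) (y ^ e) := by
  cases e with
  | ofNat e => simpa only [Int.ofNat_eq_natCast, zpow_natCast] using h.pow e
  | negSucc e => simpa only [zpow_negSucc] using (h.pow (e + 1)).inv (pow_ne_zero _ hy)

theorem sum {ι : Type*} (s : Finset ι) {X : ι → F} {Y : ι → L}
    (h : ∀ i ∈ s, SpecializesTo ψ (X i) (Y i)) :
    SpecializesTo ψ (∑ i ∈ s, X i) (∑ i ∈ s, Y i) := by
  classical
  induction s using Finset.induction_on with
  | empty => simpa using specializesTo_zero
  | insert i s hi ih =>
    rw [Finset.sum_insert hi, Finset.sum_insert hi]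
    exact (h i (s.mem_insert_self i)).add (ih fun j hj => h j (Finset.mem_insert_of_mem hj))

theorem prod {ι : Type*} (s : Finset ι) {X : ι → F} {Y : ι → L}
    (h : ∀ i ∈ s, SpecializesTo ψ (X i) (Y i)) :
    SpecializesTo ψ (∏ i ∈ s, X i) (∏ i ∈ s, Y i) := by
  classical
  induction s using Finset.induction_on with
  | empty => simpa using specializesTo_one
  | insert i s hi ih =>
    rw [Finset.prod_insert hi, Finset.prod_insert hi]
    exact (h i (s.mem_insert_self i)).mul (ih fun j hj => h j (Finset.mem_insert_of_mem hj))

end SpecializesTo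

end Specialization

section Substitution

variable {K : Type*} [Field K]

abbrev substHom (w : ℕ → Fld K) : MvPolynomial ℕ K →+* Fld K :=
  eval₂Hom (algebraMap K (Fld K)) w

variable {w : ℕ → Fld K}

theorem specializesTo_ZZ (i : ℕ) : SpecializesTo (substHom w) (ZZ K i) (w i) := by
  simpa [ZZ] using specializesTo_algebraMap (F := Fld K) (ψ := substHom w) (X i)

theorem specializesTo_algebraMap_const (c : K) :
    SpecializesTo (substHom w) (algebraMap K (Fld K) c) (algebraMap K (Fld K) c) := by
  have h := specializesTo_algebraMap (F := Fld K) (ψ := substHom w) (C c)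
  rwa [coe_eval₂Hom, eval₂_C, ← algebraMap_eq, ← IsScalarTower.algebraMap_apply] at h

theorem SpecializesTo.evF {n : ℕ} (R : (Fin n → ℤ) →₀ K) {u v : Fin n → Fld K}
    (huv : ∀ i, SpecializesTo (substHom w) (u i) (v i)) (hv : ∀ i, v i ≠ 0) :
    SpecializesTo (substHom w) (evF K R u) (evF K R v) :=
  SpecializesTo.sum _ fun e _ => (specializesTo_algebraMap_const _).mul <|
    SpecializesTo.prod _ fun i _ => (huv i).zpow (hv i) (e i)

theorem SpecializesTo.lEv (p : LaurentPolynomial K) {x y : Fld K}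
    (h : SpecializesTo (substHom w) x y) (hy : y ≠ 0) :
    SpecializesTo (substHom w) (lEv K p x) (lEv K p y) :=
  SpecializesTo.sum _ fun e _ => (specializesTo_algebraMap_const _).mul (h.zpow hy e)

end Substitution

section LaurentEvaluation

variable {K : Type*} [Field K]

theorem lEv_eq_eval₂ (p : LaurentPolynomial K) {x : Fld K} (hx : x ≠ 0) :
    lEv K p x = LaurentPolynomial.eval₂ (algebraMap K (Fld K)) (Units.mk0 x hx) p := by
  induction p using LaurentPolynomial.induction_on' with
  | add p q hp hq =>
    rw [map_add, ← hp, ← hq]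
    exact Finsupp.sum_add_index' (by simp) fun _ _ _ => by rw [map_add, add_mul]
  | C_mul_T n c =>
    rw [LaurentPolynomial.eval₂_C_mul_T, Units.val_zpow_eq_zpow_val, Units.val_mk0, lEv,
      ← LaurentPolynomial.single_eq_C_mul_T]
    exact Finsupp.sum_single_index (by simp)

theorem lEv_inv_eq_zero_of_dvd {a : K} (ha : a ≠ 0) {p : LaurentPolynomial K}
    (hp : (1 - LaurentPolynomial.C a * LaurentPolynomial.T 1) ∣ p) :
    lEv K p (algebraMap K (Fld K) a⁻¹) = 0 := by
  obtain ⟨q, rfl⟩ := hp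
  rw [lEv_eq_eval₂ _ (by simpa using ha)]
  simp [ha]

end LaurentEvaluation

section WheelPoint

variable {K : Type*} [Field K] {k : ℕ} {t : ℕ → K}

theorem ZZ_injective : Function.Injective (ZZ K) :=
  (IsFractionRing.injective (MvPolynomial ℕ K) (Fld K)).comp (X_injective (R := K))

theorem ZZ_ne_zero (i : ℕ) : ZZ K i ≠ 0 := by
  simp [ZZ, X_ne_zero]

theorem algebraMap_mul_ZZ_ne_ZZ (c : K) {i j : ℕ} (hij : i ≠ j) :
    algebraMap K (Fld K) c * ZZ K i ≠ ZZ K j := by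
  rw [ZZ, ZZ, IsScalarTower.algebraMap_apply K (MvPolynomial ℕ K) (Fld K), ← map_mul,
    (IsFractionRing.injective (MvPolynomial ℕ K) (Fld K)).ne_iff, algebraMap_eq]
  intro h
  have hji : j = i := by simpa using congrArg (eval fun l => if l = i then (0 : K) else 1) h
  exact hij hji.symm

/-- Variables are 0-indexed: `wheelCoeff t a` is the paper's ratio `z_{a+1} / z_1` on the wheel. -/
def wheelCoeff (t : ℕ → K) (a : ℕ) : K := ∏ j ∈ Finset.Icc 2 (a + 1), t j

def wheelPoint (k : ℕ) (t : ℕ → K) (m i : ℕ) : Fld K :=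
  if i < k then algebraMap K (Fld K) (wheelCoeff t i) * ZZ K m else ZZ K i

theorem wheelCond_iff {m : ℕ} (C : (Fin m → ℤ) →₀ K) :
    WheelCond K k t C ↔ (k ≤ m → evF K C (fun i => wheelPoint k t m i) = 0) :=
  Iff.rfl

variable (ht0 : ∀ j ∈ Finset.Icc 1 k, t j ≠ 0)
include ht0

theorem wheelCoeff_ne_zero {a : ℕ} (ha : a < k) : wheelCoeff t a ≠ 0 :=
  Finset.prod_ne_zero_iff.mpr fun j hj => ht0 j <| by
    simp only [Finset.mem_Icc] at hj ⊢; omega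

theorem wheelPoint_ne_zero (m i : ℕ) : wheelPoint k t m i ≠ 0 := by
  unfold wheelPoint
  split_ifs with hi
  · exact mul_ne_zero (by simpa using wheelCoeff_ne_zero ht0 hi) (ZZ_ne_zero m)
  · exact ZZ_ne_zero i

theorem wheelCoeff_ne_of_lt (htgen : ∀ c b : ℕ, 1 ≤ c → c < b → b ≤ k →
      ∏ j ∈ Finset.Icc (c + 1) b, t j ≠ 1)
    {a b : ℕ} (hab : a < b) (hb : b < k) : wheelCoeff t a ≠ wheelCoeff t b := by
  have hsplit : wheelCoeff t b = wheelCoeff t a * ∏ j ∈ Finset.Icc (a + 2) (b + 1), t j := by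
    simp only [wheelCoeff, ← Finset.Ico_add_one_right_eq_Icc]
    exact (Finset.prod_Ico_consecutive t (by omega) (by omega)).symm
  intro h
  rw [← h, eq_comm, mul_eq_left₀ (wheelCoeff_ne_zero ht0 (hab.trans hb))] at hsplit
  exact htgen (a + 1) (b + 1) (by omega) (by omega) (by omega) hsplit

theorem wheelPoint_injOn (htgen : ∀ c b : ℕ, 1 ≤ c → c < b → b ≤ k →
      ∏ j ∈ Finset.Icc (c + 1) b, t j ≠ 1) (m : ℕ) :
    Set.InjOn (wheelPoint k t m) (Set.Iio m) := by
  intro i hi j hj h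
  rw [Set.mem_Iio] at hi hj
  unfold wheelPoint at h
  split_ifs at h with hik hjk
  · have hc := (algebraMap K (Fld K)).injective (mul_right_cancel₀ (ZZ_ne_zero m) h)
    by_contra hij
    rcases Nat.lt_or_gt_of_ne hij with hlt | hlt
    · exact wheelCoeff_ne_of_lt ht0 htgen hlt hjk hc
    · exact wheelCoeff_ne_of_lt ht0 htgen hlt hik hc.symm
  · exact absurd h (algebraMap_mul_ZZ_ne_ZZ _ (by omega))
  · exact absurd h.symm (algebraMap_mul_ZZ_ne_ZZ _ (by omega))
  · exact ZZ_injective h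

theorem exists_wheelPoint_div_succ (htprod : ∏ j ∈ Finset.Icc 1 k, t j = 1) (m : ℕ)
    {c : ℕ} (hc : c < k) :
    ∃ a ∈ Finset.Icc 1 k,
      wheelPoint k t m c / wheelPoint k t m ((c + 1) % k) = algebraMap K (Fld K) (t a)⁻¹ := by
  have hZ := ZZ_ne_zero (K := K) m
  rcases Nat.lt_or_ge (c + 1) k with hck | hck
  · refine ⟨c + 2, by simp only [Finset.mem_Icc]; omega, ?_⟩
    have hsucc : wheelCoeff t (c + 1) = wheelCoeff t c * t (c + 2) :=
      Finset.prod_Icc_succ_top (by omega) t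
    have hcoeff : algebraMap K (Fld K) (wheelCoeff t c) ≠ 0 :=
      (map_ne_zero _).mpr (wheelCoeff_ne_zero ht0 hc)
    rw [Nat.mod_eq_of_lt hck, wheelPoint, wheelPoint, if_pos hc, if_pos hck, hsucc, map_mul,
      map_inv₀]
    field_simp
  · obtain rfl : k = c + 1 := by omega
    refine ⟨1, by simp, ?_⟩
    have hwrap : t 1 * wheelCoeff t c = 1 := by
      rw [← htprod, ← Finset.mul_prod_Ioc_eq_prod_Icc (by omega), wheelCoeff,
        ← Finset.Icc_add_one_left_eq_Ioc]
      rfl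
    rw [Nat.mod_self, wheelPoint, wheelPoint, if_pos hc, if_pos (by omega),
      eq_inv_of_mul_eq_one_right hwrap, wheelCoeff, Finset.Icc_eq_empty (by omega),
      Finset.prod_empty, map_one, one_mul, mul_div_cancel_right₀ _ hZ]

end WheelPoint

section Symmetric

variable {K : Type*} [Field K] {n : ℕ} {R : (Fin n → ℤ) →₀ K}

theorem evF_comp_perm (hsym : ∀ (σ : Equiv.Perm (Fin n)) (e : Fin n → ℤ), R (e ∘ σ) = R e)
    (ρ : Equiv.Perm (Fin n)) (v : Fin n → Fld K) : evF K R (v ∘ ρ) = evF K R v := by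
  have hcomp : ∀ e : Fin n → ℤ, ρ.arrowCongr (Equiv.refl ℤ) e = e ∘ ρ.symm := fun _ => rfl
  unfold evF Finsupp.sum
  refine Finset.sum_equiv (ρ.arrowCongr (Equiv.refl ℤ)) (fun e => ?_) (fun e _ => ?_)
  · simp only [Finsupp.mem_support_iff, hcomp, hsym]
  · simp only [hcomp, hsym, Function.comp_apply]
    rw [← Equiv.prod_comp ρ fun j => v j ^ e (ρ.symm j)]
    simp only [Equiv.symm_apply_apply]

theorem evF_eq_zero_of_wheelCond {k : ℕ} {t : ℕ → K}
    (hsym : ∀ (σ : Equiv.Perm (Fin n)) (e : Fin n → ℤ), R (e ∘ σ) = R e)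
    (hR : WheelCond K k t R) {v : Fin n → Fld K} (hv : ∀ i, v i ≠ 0) {ι : Fin k → Fin n}
    (hι : Function.Injective ι) (x : Fld K)
    (hvι : ∀ a, v (ι a) = algebraMap K (Fld K) (wheelCoeff t a) * x) :
    evF K R v = 0 := by
  have hkn : k ≤ n := Fin.le_of_injective ι hι
  obtain ⟨ρ, hρ⟩ :=
    Equiv.Perm.exists_extending_pair (Fin.castLE hkn) ι (Fin.castLE_injective hkn) hι
  let w : ℕ → Fld K := fun j => if h : j < n then v (ρ ⟨j, h⟩) else x
  have hspec : ∀ i : Fin n, SpecializesTo (substHom w) (wheelPoint k t n i) ((v ∘ ρ) i) := by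
    intro i
    by_cases hi : (i : ℕ) < k
    · have hvi : (v ∘ ρ) i = algebraMap K (Fld K) (wheelCoeff t i) * x := by
        rw [Function.comp_apply, ← hvι ⟨i, hi⟩, ← hρ]
        rfl
      rw [wheelPoint, if_pos hi, hvi]
      exact (specializesTo_algebraMap_const _).mul (by simpa [w] using specializesTo_ZZ (w := w) n)
    · rw [wheelPoint, if_neg hi]
      simpa [w] using specializesTo_ZZ (w := w) i
  have hzero := SpecializesTo.evF R hspec fun i => hv _
  rw [(wheelCond_iff R).mp hR hkn, evF_comp_perm hsym] at hzero
  exact (specializesTo_zero.unique hzero).symm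

theorem evF_wheelPoint_comp_eq_zero {k m : ℕ} {t : ℕ → K} (ht0 : ∀ j ∈ Finset.Icc 1 k, t j ≠ 0)
    (hsym : ∀ (σ : Equiv.Perm (Fin n)) (e : Fin n → ℤ), R (e ∘ σ) = R e)
    (hR : WheelCond K k t R) {τ : Fin n → Fin m} (hcover : ∀ a : Fin k, ∃ i, (τ i : ℕ) = a) :
    evF K R (fun i => wheelPoint k t m (τ i)) = 0 := by
  choose ι hι using hcover
  refine evF_eq_zero_of_wheelCond (ι := ι) hsym hR (fun _ => wheelPoint_ne_zero ht0 _ _)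
    (fun a b h => Fin.ext ?_) (ZZ K m) fun a => ?_
  · rw [← hι a, ← hι b, h]
  · rw [hι, wheelPoint, if_pos a.isLt]

end Symmetric

theorem exists_cyclic_boundary {k : ℕ} {P : ℕ → Prop} {a b : ℕ} (ha : a < k) (hPa : P a)
    (hb : b < k) (hPb : ¬ P b) : ∃ c < k, P c ∧ ¬ P ((c + 1) % k) := by
  by_contra! hstep
  have hiter : ∀ j, P ((a + j) % k) := by
    intro j
    induction j with
    | zero => rwa [add_zero, Nat.mod_eq_of_lt ha]
    | succ j ih =>
      simpa only [Nat.mod_add_mod, add_assoc] using hstep _ (Nat.mod_lt _ (by omega)) ih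
  have hback := hiter (b + k - a)
  rw [show a + (b + k - a) = b + k by omega, Nat.add_mod_right, Nat.mod_eq_of_lt hb] at hback
  exact hPb hback

section Shuffle

variable {K : Type*} [Field K] {n n' : ℕ} (p : LaurentPolynomial K) (R : (Fin n → ℤ) →₀ K)
  (R' : (Fin n' → ℤ) →₀ K)

/-- The `σ`-summand of the shuffle product of `R` and `R'`, evaluated at `z_i = v i`. -/
def shuffleTerm (v : ℕ → Fld K) (σ : Equiv.Perm (Fin (n + n'))) : Fld K :=
  evF K R (fun i => v (σ (Fin.castAdd n' i))) * evF K R' (fun j => v (σ (Fin.natAdd n j))) *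
    ∏ i : Fin n, ∏ j : Fin n',
      lEv K p (v (σ (Fin.castAdd n' i)) / v (σ (Fin.natAdd n j))) *
        (v (σ (Fin.natAdd n j)) / (v (σ (Fin.natAdd n j)) - v (σ (Fin.castAdd n' i))))

theorem specializesTo_shuffleTerm {w : ℕ → Fld K} (hw0 : ∀ i, w i ≠ 0)
    (hw : Set.InjOn w (Set.Iio (n + n'))) (σ : Equiv.Perm (Fin (n + n'))) :
    SpecializesTo (substHom w) (shuffleTerm p R R' (ZZ K) σ) (shuffleTerm p R R' w σ) := by
  have hZ : ∀ i : ℕ, SpecializesTo (substHom w) (ZZ K i) (w i) := specializesTo_ZZ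
  have hsub : ∀ i j, w (σ (Fin.natAdd n j)) - w (σ (Fin.castAdd n' i)) ≠ 0 := by
    intro i j h
    have hval := congrArg Fin.val <| σ.injective <| Fin.ext <|
      hw (Fin.isLt _) (Fin.isLt _) (sub_eq_zero.mp h)
    simp only [Fin.val_natAdd, Fin.val_castAdd] at hval
    omega
  refine ((SpecializesTo.evF R (fun _ => hZ _) fun _ => hw0 _).mul
    (SpecializesTo.evF R' (fun _ => hZ _) fun _ => hw0 _)).mul
    (SpecializesTo.prod _ fun i _ => SpecializesTo.prod _ fun j _ => ?_)
  exact (((hZ _).div (hZ _) (hw0 _)).lEv p (div_ne_zero (hw0 _) (hw0 _))).mul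
    ((hZ _).div ((hZ _).sub (hZ _)) (hsub i j))

theorem shuffleTerm_wheelPoint_eq_zero {k : ℕ} {t : ℕ → K}
    (ht0 : ∀ j ∈ Finset.Icc 1 k, t j ≠ 0) (htprod : ∏ j ∈ Finset.Icc 1 k, t j = 1)
    (hp : ∀ a ∈ Finset.Icc 1 k,
      ((1 : LaurentPolynomial K) - LaurentPolynomial.C (t a) * LaurentPolynomial.T 1) ∣ p)
    (hRsym : ∀ (σ : Equiv.Perm (Fin n)) (e : Fin n → ℤ), R (e ∘ σ) = R e)
    (hR'sym : ∀ (σ : Equiv.Perm (Fin n')) (e : Fin n' → ℤ), R' (e ∘ σ) = R' e)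
    (hR : WheelCond K k t R) (hR' : WheelCond K k t R') (hkm : k ≤ n + n')
    (σ : Equiv.Perm (Fin (n + n'))) :
    shuffleTerm p R R' (wheelPoint k t (n + n')) σ = 0 := by
  let P : ℕ → Prop := fun c => ∃ i : Fin n, (σ (Fin.castAdd n' i) : ℕ) = c
  let Q : ℕ → Prop := fun c => ∃ j : Fin n', (σ (Fin.natAdd n j) : ℕ) = c
  have hPQ : ∀ c < k, P c ∨ Q c := by
    intro c hc
    obtain ⟨y, hy⟩ := σ.surjective ⟨c, by omega⟩
    induction y using Fin.addCases with
    | left i => exact Or.inl ⟨i, by rw [hy]⟩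
    | right j => exact Or.inr ⟨j, by rw [hy]⟩
  by_cases hfirst : ∀ a : Fin k, P a
  · rw [shuffleTerm, evF_wheelPoint_comp_eq_zero (τ := fun i => σ (Fin.castAdd n' i)) ht0 hRsym hR
      hfirst, zero_mul, zero_mul]
  by_cases hsecond : ∀ a : Fin k, Q a
  · rw [shuffleTerm, evF_wheelPoint_comp_eq_zero (τ := fun j => σ (Fin.natAdd n j)) ht0 hR'sym
      hR' hsecond, mul_zero, zero_mul]
  simp only [not_forall] at hfirst hsecond
  obtain ⟨a, ha⟩ := hfirst
  obtain ⟨b, hb⟩ := hsecond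
  obtain ⟨c, hc, ⟨i, hi⟩, hnext⟩ :=
    exists_cyclic_boundary b.isLt ((hPQ b b.isLt).resolve_right hb) a.isLt ha
  obtain ⟨j, hj⟩ := (hPQ _ (Nat.mod_lt _ (by omega))).resolve_left hnext
  obtain ⟨d, hd, hratio⟩ := exists_wheelPoint_div_succ ht0 htprod (n + n') hc
  refine mul_eq_zero_of_right _ <| Finset.prod_eq_zero (Finset.mem_univ i) <|
    Finset.prod_eq_zero (Finset.mem_univ j) ?_
  rw [hi, hj, hratio, lEv_inv_eq_zero_of_dvd (ht0 d hd) (hp d hd), zero_mul]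

end Shuffle

theorem stmt7_general (K : Type*) [Field K] (k : ℕ) (t : ℕ → K)
    (ht0 : ∀ j ∈ Finset.Icc 1 k, t j ≠ 0)
    (htprod : ∏ j ∈ Finset.Icc 1 k, t j = 1)
    (htgen : ∀ c b : ℕ, 1 ≤ c → c < b → b ≤ k → ∏ j ∈ Finset.Icc (c + 1) b, t j ≠ 1)
    (p : LaurentPolynomial K)
    (hp : ∀ a ∈ Finset.Icc 1 k,
      ((1 : LaurentPolynomial K) - LaurentPolynomial.C (t a) * LaurentPolynomial.T 1) ∣ p)
    (n n' : ℕ)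
    (R : (Fin n → ℤ) →₀ K) (R' : (Fin n' → ℤ) →₀ K)
    (hRsym : ∀ (σ : Equiv.Perm (Fin n)) (e : Fin n → ℤ), R (e ∘ σ) = R e)
    (hR'sym : ∀ (σ : Equiv.Perm (Fin n')) (e : Fin n' → ℤ), R' (e ∘ σ) = R' e)
    (hRwheel : WheelCond K k t R) (hR'wheel : WheelCond K k t R') :
    ∀ C : (Fin (n + n') → ℤ) →₀ K,
      evF K C (fun i => ZZ K i.val) =
        (∑ σ : Equiv.Perm (Fin (n + n')),
          evF K R (fun i => ZZ K (σ (Fin.castAdd n' i)).val) *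
            evF K R' (fun j => ZZ K (σ (Fin.natAdd n j)).val) *
            ∏ i : Fin n, ∏ j : Fin n',
              lEv K p (ZZ K (σ (Fin.castAdd n' i)).val / ZZ K (σ (Fin.natAdd n j)).val) *
                (ZZ K (σ (Fin.natAdd n j)).val /
                  (ZZ K (σ (Fin.natAdd n j)).val - ZZ K (σ (Fin.castAdd n' i)).val))) →
      WheelCond K k t C := by
  intro C hC hkm
  have hC_wheel : SpecializesTo (substHom (wheelPoint k t (n + n')))
      (evF K C fun i => ZZ K i) (evF K C fun i => wheelPoint k t (n + n') i) :=
    SpecializesTo.evF C (fun _ => specializesTo_ZZ _) fun _ => wheelPoint_ne_zero ht0 _ _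
  have hshuffle_wheel := SpecializesTo.sum Finset.univ fun σ _ =>
    specializesTo_shuffleTerm p R R' (wheelPoint_ne_zero ht0 _) (wheelPoint_injOn ht0 htgen _) σ
  simp only [shuffleTerm_wheelPoint_eq_zero p R R' ht0 htprod hp hRsym hR'sym hRwheel hR'wheel hkm,
    Finset.sum_const_zero] at hshuffle_wheel
  rw [hC] at hC_wheel
  exact hC_wheel.unique hshuffle_wheel

/-- Let `t 1, …, t k` be nonzero with `t 1 ⋯ t k = 1` and
`t (c+1) ⋯ t b ≠ 1` for all `1 ≤ c < b ≤ k`, and let `p` be a one-variable Laurent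
polynomial divisible by `1 − t a · x` for every `a ∈ {1,…,k}`.  If the symmetric Laurent
polynomials `R` (in `n` variables) and `R'` (in `n'` variables) satisfy the wheel condition,
then so does the symmetric Laurent polynomial
`G = ∑_{σ ∈ S_{n+n'}} σ·[R·R'·∏ p(z_a/z_b) z_b/(z_b−z_a)]`
(i.e. any coefficient function `C` representing `G` satisfies the wheel condition). -/
theorem stmt7 (K : Type*) [Field K] [CharZero K] (k : ℕ) (hk : 1 ≤ k) (t : ℕ → K)
    (ht0 : ∀ j ∈ Finset.Icc 1 k, t j ≠ 0)
    (htprod : ∏ j ∈ Finset.Icc 1 k, t j = 1)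
    (htgen : ∀ c b : ℕ, 1 ≤ c → c < b → b ≤ k → ∏ j ∈ Finset.Icc (c + 1) b, t j ≠ 1)
    (p : LaurentPolynomial K)
    (hp : ∀ a ∈ Finset.Icc 1 k,
      ((1 : LaurentPolynomial K) - LaurentPolynomial.C (t a) * LaurentPolynomial.T 1) ∣ p)
    (n n' : ℕ)
    (R : (Fin n → ℤ) →₀ K) (R' : (Fin n' → ℤ) →₀ K)
    (hRsym : ∀ (σ : Equiv.Perm (Fin n)) (e : Fin n → ℤ), R (e ∘ σ) = R e)
    (hR'sym : ∀ (σ : Equiv.Perm (Fin n')) (e : Fin n' → ℤ), R' (e ∘ σ) = R' e)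
    (hRwheel : WheelCond K k t R) (hR'wheel : WheelCond K k t R') :
    ∀ C : (Fin (n + n') → ℤ) →₀ K,
      evF K C (fun i => ZZ K i.val) =
        (∑ σ : Equiv.Perm (Fin (n + n')),
          evF K R (fun i => ZZ K (σ (Fin.castAdd n' i)).val) *
            evF K R' (fun j => ZZ K (σ (Fin.natAdd n j)).val) *
            ∏ i : Fin n, ∏ j : Fin n',
              lEv K p (ZZ K (σ (Fin.castAdd n' i)).val / ZZ K (σ (Fin.natAdd n j)).val) *
                (ZZ K (σ (Fin.natAdd n j)).val /
                  (ZZ K (σ (Fin.natAdd n j)).val - ZZ K (σ (Fin.castAdd n' i)).val))) →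
      WheelCond K k t C :=
  stmt7_general K k t ht0 htprod htgen p hp n n' R R' hRsym hR'sym hRwheel hR'wheel
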